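/- arXiv:0705.4239 — 2 statements merged into one kernel-verified Lean document; each statement's English description precedes it below -/
import Mathlib

section
/- Assume k₁,k₂,k₃ ∈ ℤ, l₁,l₂,l₃ ∈ ℤ, j₁,j₂,j₃ ∈ ℤ₊, and f_i : ℝ³ → [0,∞) are L² functions supported in D_{k_i,l_i,j_i} for i = 1,2,3. Then ∫_{ℝ³} (f₁∗f₂)·f₃ ≲ 2^{[min(k₁,k₂,k₃)+min(l₁,l₂,l₃)+min(j₁,j₂,j₃)]/2} · ‖f₁‖_{L²}‖f₂‖_{L²}‖f₃‖_{L²}, with the implicit constant independent of all parameters. -/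
open MeasureTheory

/-- The KP-I dispersion relation `ω(ξ,μ) = ξ³ + μ²/ξ`. -/
noncomputable def omega (ξ μ : ℝ) : ℝ := ξ ^ 3 + μ ^ 2 / ξ

/-- The dyadic frequency annulus `Ĩ_k = {ξ : 2^(k-1) ≤ |ξ| ≤ 2^(k+1)}`. -/
def Itilde (k : ℤ) : Set ℝ := {ξ : ℝ | (2 : ℝ) ^ (k - 1) ≤ |ξ| ∧ |ξ| ≤ (2 : ℝ) ^ (k + 1)}

/-- The region `D_{k,∞,j} = {(ξ,μ,τ) : ξ ∈ Ĩ_k, |τ - ω(ξ,μ)| ≤ 2^j}`. -/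
noncomputable def Dset (k j : ℤ) : Set (ℝ × ℝ × ℝ) :=
  {p : ℝ × ℝ × ℝ | p.1 ∈ Itilde k ∧ |p.2.2 - omega p.1 p.2.1| ≤ (2 : ℝ) ^ j}

/-- Convolution on `ℝ³`. -/
noncomputable def conv (f g : ℝ × ℝ × ℝ → ℝ) (x : ℝ × ℝ × ℝ) : ℝ :=
  ∫ y, f y * g (x - y)

/-- The weight `p(ξ,μ) = 1 + |μ|/(|ξ| + |ξ|²)`. -/
noncomputable def pw (ξ μ : ℝ) : ℝ := 1 + |μ| / (|ξ| + |ξ| ^ 2)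

/-- The region `D_{k,l,j} = {(ξ,μ,τ) : ξ ∈ Ĩ_k, |μ| ≤ 2^l, |τ - ω(ξ,μ)| ≤ 2^j}`. -/
noncomputable def DsetL (k l j : ℤ) : Set (ℝ × ℝ × ℝ) :=
  {p : ℝ × ℝ × ℝ | p.1 ∈ Itilde k ∧ |p.2.1| ≤ (2 : ℝ) ^ l ∧
    |p.2.2 - omega p.1 p.2.1| ≤ (2 : ℝ) ^ j}

open scoped ENNReal
open Function Set

/-!
Write `⟨a ∗ b, c⟩ = ∫∫ a(s) b(t) c(s + t)`. If `a` is supported in a set of measure `r`,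
Cauchy–Schwarz in `s` and then in `t` give `⟨a ∗ b, c⟩ ≤ r^{1/2} ‖a‖₂ ‖b‖₂ ‖c‖₂`, and the
symmetries `⟨a ∗ b, c⟩ = ⟨b ∗ a, c⟩ = ⟨c ∗ a(-·), b⟩` allow any of the three functions to play
the role of `a`. On a product `G × H`, Fubini reduces the form to the form on `G` of the fibrewise
`L²` norms, once the estimate is known on the fibres, so the gains of the coordinates multiply.
On `D_{k,l,j}` the `τ`-fibres are intervals of length `2^{j+1}`, the `μ`-projections of the
`(μ,τ)`-fibres have length `≤ 2^{l+1}` and the `ξ`-projection has measure `≤ 2^{k+2}`; at each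
level the function with the smallest index is used.
-/

section Holder

variable {α : Type*} [MeasurableSpace α] {μ : Measure α}

lemma eLpNorm_two_rpow_two (f : α → ℝ≥0∞) : eLpNorm f 2 μ ^ (2 : ℝ) = ∫⁻ x, f x ^ (2 : ℝ) ∂μ := by
  rw [eLpNorm_eq_lintegral_rpow_enorm_toReal two_ne_zero ENNReal.ofNat_ne_top, ← ENNReal.rpow_mul]
  norm_num

lemma eLpNorm_two_eq_iff {f : α → ℝ≥0∞} {x : ℝ≥0∞} :
    eLpNorm f 2 μ = x ↔ ∫⁻ a, f a ^ (2 : ℝ) ∂μ = x ^ (2 : ℝ) := by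
  rw [← eLpNorm_two_rpow_two, (ENNReal.rpow_left_injective two_ne_zero).eq_iff]

lemma lintegral_mul_le_eLpNorm_two_mul {f g : α → ℝ≥0∞} (hf : AEMeasurable f μ)
    (hg : AEMeasurable g μ) : ∫⁻ x, f x * g x ∂μ ≤ eLpNorm f 2 μ * eLpNorm g 2 μ := by
  simpa [eLpNorm_eq_lintegral_rpow_enorm_toReal two_ne_zero ENNReal.ofNat_ne_top]
    using ENNReal.lintegral_mul_le_Lp_mul_Lq μ Real.HolderConjugate.two_two hf hg

lemma lintegral_le_measure_support_rpow_mul_eLpNorm {f : α → ℝ≥0∞} (hf : Measurable f) :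
    ∫⁻ x, f x ∂μ ≤ μ (support f) ^ (1 / 2 : ℝ) * eLpNorm f 2 μ := by
  have hs : MeasurableSet (support f) := measurableSet_support hf
  calc ∫⁻ x, f x ∂μ = ∫⁻ x, (support f).indicator (fun _ => 1) x * f x ∂μ := by
        congr 1; ext x
        by_cases hx : f x = 0 <;> simp [hx]
    _ ≤ eLpNorm ((support f).indicator fun _ => (1 : ℝ≥0∞)) 2 μ * eLpNorm f 2 μ :=
        lintegral_mul_le_eLpNorm_two_mul ((measurable_const.indicator hs).aemeasurable)
          hf.aemeasurable
    _ = μ (support f) ^ (1 / 2 : ℝ) * eLpNorm f 2 μ := by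
        rw [eLpNorm_indicator_const hs two_ne_zero ENNReal.ofNat_ne_top]
        simp

end Holder

section FiberNorm

variable {α β : Type*} [MeasurableSpace β] {ν : Measure β} {F : α × β → ℝ≥0∞}

noncomputable def fiberNorm (ν : Measure β) (F : α × β → ℝ≥0∞) (x : α) : ℝ≥0∞ :=
  eLpNorm (fun y => F (x, y)) 2 ν

lemma fiberNorm_rpow_two (x : α) : fiberNorm ν F x ^ (2 : ℝ) = ∫⁻ y, F (x, y) ^ (2 : ℝ) ∂ν :=
  eLpNorm_two_rpow_two _

lemma support_fiberNorm_subset : support (fiberNorm ν F) ⊆ Prod.fst '' support F := by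
  intro x hx
  by_contra h
  apply hx
  have : (fun y => F (x, y)) = 0 := funext fun y => by
    by_contra hy
    exact h ⟨(x, y), hy, rfl⟩
  simp [fiberNorm, this]

variable [MeasurableSpace α] [SFinite ν]

lemma measurable_fiberNorm (hF : Measurable F) : Measurable (fiberNorm ν F) := by
  have : Measurable fun x => fiberNorm ν F x ^ (2 : ℝ) := by
    simp_rw [fiberNorm_rpow_two]
    exact (hF.pow_const _).lintegral_prod_right'
  convert this.pow_const (1 / 2 : ℝ) using 1
  ext x
  rw [← ENNReal.rpow_mul]
  norm_num

lemma eLpNorm_fiberNorm {μ : Measure α} [SFinite μ] (hF : Measurable F) :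
    eLpNorm (fiberNorm ν F) 2 μ = eLpNorm F 2 (μ.prod ν) := by
  rw [eLpNorm_two_eq_iff, eLpNorm_two_rpow_two]
  simp_rw [fiberNorm_rpow_two]
  exact (lintegral_prod _ (hF.pow_const _).aemeasurable).symm

end FiberNorm

instance Prod.measurableAdd₂ {G H : Type*} [MeasurableSpace G] [Add G] [MeasurableAdd₂ G]
    [MeasurableSpace H] [Add H] [MeasurableAdd₂ H] : MeasurableAdd₂ (G × H) :=
  ⟨(measurable_fst.fst.add measurable_snd.fst).prodMk (measurable_fst.snd.add measurable_snd.snd)⟩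

section ConvPairing

variable {G : Type*} [MeasurableSpace G] [AddCommGroup G] [MeasurableAdd₂ G]

noncomputable def convPairing (μ : Measure G) (a b c : G → ℝ≥0∞) : ℝ≥0∞ :=
  ∫⁻ s, ∫⁻ t, a s * b t * c (s + t) ∂μ ∂μ

variable {μ : Measure G} [SFinite μ] {a b c : G → ℝ≥0∞}

lemma convPairing_comm (ha : Measurable a) (hb : Measurable b) (hc : Measurable c) :
    convPairing μ a b c = convPairing μ b a c := by
  rw [convPairing, lintegral_lintegral_swap (by fun_prop)]
  simp only [convPairing, mul_comm (a _), add_comm]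

variable [μ.IsAddLeftInvariant]

lemma eLpNorm_fiberNorm_mul_comp_add (ha : Measurable a) (hc : Measurable c) :
    eLpNorm (fiberNorm μ fun p : G × G => a p.2 * c (p.2 + p.1)) 2 μ =
      eLpNorm a 2 μ * eLpNorm c 2 μ := by
  rw [eLpNorm_two_eq_iff, ENNReal.mul_rpow_of_nonneg _ _ zero_le_two, eLpNorm_two_rpow_two,
    eLpNorm_two_rpow_two, ← lintegral_mul_const _ (by fun_prop)]
  simp_rw [fiberNorm_rpow_two, ENNReal.mul_rpow_of_nonneg _ _ zero_le_two]
  rw [lintegral_lintegral_swap (by fun_prop)]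
  refine lintegral_congr fun s => ?_
  rw [lintegral_const_mul _ (by fun_prop), lintegral_add_left_eq_self (fun u => c u ^ (2 : ℝ)) s]

lemma convPairing_le_of_measure_support_left (ha : Measurable a) (hb : Measurable b)
    (hc : Measurable c) :
    convPairing μ a b c ≤
      μ (support a) ^ (1 / 2 : ℝ) * (eLpNorm a 2 μ * eLpNorm b 2 μ * eLpNorm c 2 μ) := by
  set W := fiberNorm μ fun p : G × G => a p.2 * c (p.2 + p.1)
  have hW : Measurable W := measurable_fiberNorm (by fun_prop)
  have hinner : ∀ t, ∫⁻ s, a s * c (s + t) ∂μ ≤ μ (support a) ^ (1 / 2 : ℝ) * W t := fun t =>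
    (lintegral_le_measure_support_rpow_mul_eLpNorm (by fun_prop)).trans <| by
      gcongr
      · exact support_mul_subset_left _ _
      · exact le_rfl
  calc convPairing μ a b c = ∫⁻ t, b t * ∫⁻ s, a s * c (s + t) ∂μ ∂μ := by
        rw [convPairing, lintegral_lintegral_swap (by fun_prop)]
        refine lintegral_congr fun t => ?_
        rw [← lintegral_const_mul _ (by fun_prop)]
        exact lintegral_congr fun s => by ring
    _ ≤ ∫⁻ t, b t * (μ (support a) ^ (1 / 2 : ℝ) * W t) ∂μ := by gcongr with t; exact hinner t
    _ = μ (support a) ^ (1 / 2 : ℝ) * ∫⁻ t, b t * W t ∂μ := by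
        rw [← lintegral_const_mul _ (by fun_prop)]
        exact lintegral_congr fun t => by ring
    _ ≤ μ (support a) ^ (1 / 2 : ℝ) * (eLpNorm b 2 μ * eLpNorm W 2 μ) := by
        gcongr
        exact lintegral_mul_le_eLpNorm_two_mul hb.aemeasurable hW.aemeasurable
    _ = μ (support a) ^ (1 / 2 : ℝ) * (eLpNorm a 2 μ * eLpNorm b 2 μ * eLpNorm c 2 μ) := by
        rw [eLpNorm_fiberNorm_mul_comp_add ha hc]
        ring

variable [MeasurableNeg G]

lemma lintegral_lconvolution_mul_eq_convPairing (ha : Measurable a) (hb : Measurable b)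
    (hc : Measurable c) : ∫⁻ x, (a ⋆ₗ[μ] b) x * c x ∂μ = convPairing μ a b c :=
  calc ∫⁻ x, (a ⋆ₗ[μ] b) x * c x ∂μ = ∫⁻ x, ∫⁻ y, a y * b (-y + x) * c x ∂μ ∂μ :=
        lintegral_congr fun x => (lintegral_mul_const _ (by fun_prop)).symm
    _ = ∫⁻ y, ∫⁻ x, a y * b (-y + x) * c x ∂μ ∂μ := lintegral_lintegral_swap (by fun_prop)
    _ = convPairing μ a b c := lintegral_congr fun y => by
        rw [← lintegral_add_left_eq_self _ y]
        simp only [neg_add_cancel_left]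

variable [μ.IsNegInvariant]

lemma convPairing_eq_convPairing_comp_neg (ha : Measurable a) (hb : Measurable b)
    (hc : Measurable c) :
    convPairing μ a b c = convPairing μ c (fun s => a (-s)) b := by
  have hneg : ∀ u, ∫⁻ v, c u * a (-v) * b (u + v) ∂μ = ∫⁻ s, c u * a s * b (u - s) ∂μ :=
    fun u => by
      rw [← lintegral_neg_eq_self]
      simp only [neg_neg, ← sub_eq_add_neg]
  rw [convPairing, convPairing, lintegral_congr hneg,
    lintegral_lintegral_swap (f := fun u s => c u * a s * b (u - s)) (by fun_prop)]
  refine lintegral_congr fun s => ?_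
  rw [← lintegral_add_left_eq_self (fun u => c u * a s * b (u - s)) s]
  refine lintegral_congr fun t => ?_
  rw [add_sub_cancel_left]
  ring

lemma convPairing_le_of_measure_support {r : ℝ≥0∞} (ha : Measurable a) (hb : Measurable b)
    (hc : Measurable c) (hr : μ (support a) ≤ r ∨ μ (support b) ≤ r ∨ μ (support c) ≤ r) :
    convPairing μ a b c ≤ r ^ (1 / 2 : ℝ) * (eLpNorm a 2 μ * eLpNorm b 2 μ * eLpNorm c 2 μ) := by
  rcases hr with hr | hr | hr
  · exact (convPairing_le_of_measure_support_left ha hb hc).trans (by gcongr)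
  · calc convPairing μ a b c = convPairing μ b a c := convPairing_comm ha hb hc
      _ ≤ μ (support b) ^ (1 / 2 : ℝ) * (eLpNorm b 2 μ * eLpNorm a 2 μ * eLpNorm c 2 μ) :=
        convPairing_le_of_measure_support_left hb ha hc
      _ ≤ _ := by rw [mul_comm (eLpNorm b 2 μ)]; gcongr
  · have hneg : eLpNorm (fun s => a (-s)) 2 μ = eLpNorm a 2 μ :=
      eLpNorm_comp_measurePreserving ha.aestronglyMeasurable (Measure.measurePreserving_neg μ)
    calc convPairing μ a b c = convPairing μ c (fun s => a (-s)) b :=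
          convPairing_eq_convPairing_comp_neg ha hb hc
      _ ≤ μ (support c) ^ (1 / 2 : ℝ) * (eLpNorm c 2 μ * eLpNorm a 2 μ * eLpNorm b 2 μ) := by
        rw [← hneg]
        exact convPairing_le_of_measure_support_left hc (by fun_prop) hb
      _ = μ (support c) ^ (1 / 2 : ℝ) * (eLpNorm a 2 μ * eLpNorm b 2 μ * eLpNorm c 2 μ) := by
        ring
      _ ≤ _ := by gcongr

end ConvPairing

section Prod

variable {G H : Type*} [MeasurableSpace G] [AddCommGroup G] [MeasurableAdd₂ G]
  [MeasurableSpace H] [AddCommGroup H] [MeasurableAdd₂ H] {μ : Measure G} {ν : Measure H}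
  [SFinite μ] [SFinite ν] {g₁ g₂ g₃ : G × H → ℝ≥0∞}

lemma convPairing_prod_eq (h₁ : Measurable g₁) (h₂ : Measurable g₂) (h₃ : Measurable g₃) :
    convPairing (μ.prod ν) g₁ g₂ g₃ = ∫⁻ x₁, ∫⁻ x₂, convPairing ν (fun y => g₁ (x₁, y))
      (fun y => g₂ (x₂, y)) (fun y => g₃ (x₁ + x₂, y)) ∂μ ∂μ := by
  have hp : Measurable fun p => ∫⁻ q, g₁ p * g₂ q * g₃ (p + q) ∂μ.prod ν :=
    Measurable.lintegral_prod_right'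
      (f := fun z : (G × H) × G × H => g₁ z.1 * g₂ z.2 * g₃ (z.1 + z.2)) (by fun_prop)
  rw [convPairing, lintegral_prod _ hp.aemeasurable]
  refine lintegral_congr fun x₁ => ?_
  have hinner : ∀ y₁, ∫⁻ q, g₁ (x₁, y₁) * g₂ q * g₃ ((x₁, y₁) + q) ∂μ.prod ν =
      ∫⁻ x₂, ∫⁻ y₂, g₁ (x₁, y₁) * g₂ (x₂, y₂) * g₃ (x₁ + x₂, y₁ + y₂) ∂ν ∂μ :=
    fun y₁ => lintegral_prod _ (by fun_prop)
  rw [lintegral_congr hinner, lintegral_lintegral_swap]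
  · rfl
  · exact (Measurable.lintegral_prod_right'
      (f := fun z : (H × G) × H => g₁ (x₁, z.1.1) * g₂ (z.1.2, z.2) * g₃ (x₁ + z.1.2, z.1.1 + z.2))
      (by fun_prop)).aemeasurable

variable [MeasurableNeg G] [μ.IsAddLeftInvariant] [μ.IsNegInvariant]

lemma convPairing_prod_le {A r : ℝ≥0∞} (h₁ : Measurable g₁) (h₂ : Measurable g₂)
    (h₃ : Measurable g₃)
    (hfib : ∀ x₁ x₂, convPairing ν (fun y => g₁ (x₁, y)) (fun y => g₂ (x₂, y))
      (fun y => g₃ (x₁ + x₂, y)) ≤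
        A * (fiberNorm ν g₁ x₁ * fiberNorm ν g₂ x₂ * fiberNorm ν g₃ (x₁ + x₂)))
    (hr : μ (Prod.fst '' support g₁) ≤ r ∨ μ (Prod.fst '' support g₂) ≤ r ∨
      μ (Prod.fst '' support g₃) ≤ r) :
    convPairing (μ.prod ν) g₁ g₂ g₃ ≤ A * r ^ (1 / 2 : ℝ) *
      (eLpNorm g₁ 2 (μ.prod ν) * eLpNorm g₂ 2 (μ.prod ν) * eLpNorm g₃ 2 (μ.prod ν)) := by
  have hsupp : μ (support (fiberNorm ν g₁)) ≤ r ∨ μ (support (fiberNorm ν g₂)) ≤ r ∨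
      μ (support (fiberNorm ν g₃)) ≤ r := by
    refine hr.imp (le_trans' · ?_) (Or.imp (le_trans' · ?_) (le_trans' · ?_)) <;>
      exact measure_mono support_fiberNorm_subset
  calc convPairing (μ.prod ν) g₁ g₂ g₃
      ≤ ∫⁻ x₁, ∫⁻ x₂, A * (fiberNorm ν g₁ x₁ * fiberNorm ν g₂ x₂ * fiberNorm ν g₃ (x₁ + x₂))
          ∂μ ∂μ := by
        rw [convPairing_prod_eq h₁ h₂ h₃]
        gcongr with x₁ x₂
        exact hfib x₁ x₂
    _ = A * convPairing μ (fiberNorm ν g₁) (fiberNorm ν g₂) (fiberNorm ν g₃) := by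
        have hΦ₁ := measurable_fiberNorm (ν := ν) h₁
        have hΦ₂ := measurable_fiberNorm (ν := ν) h₂
        have hΦ₃ := measurable_fiberNorm (ν := ν) h₃
        rw [convPairing, ← lintegral_const_mul _ (Measurable.lintegral_prod_right'
          (f := fun z : G × G => fiberNorm ν g₁ z.1 * fiberNorm ν g₂ z.2 *
            fiberNorm ν g₃ (z.1 + z.2)) (by fun_prop))]
        refine lintegral_congr fun x₁ => ?_
        rw [← lintegral_const_mul _ (by fun_prop)]
    _ ≤ A * (r ^ (1 / 2 : ℝ) * (eLpNorm (fiberNorm ν g₁) 2 μ * eLpNorm (fiberNorm ν g₂) 2 μ *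
          eLpNorm (fiberNorm ν g₃) 2 μ)) := by
        gcongr
        exact convPairing_le_of_measure_support (measurable_fiberNorm h₁)
          (measurable_fiberNorm h₂) (measurable_fiberNorm h₃) hsupp
    _ = _ := by
        rw [eLpNorm_fiberNorm h₁, eLpNorm_fiberNorm h₂, eLpNorm_fiberNorm h₃]
        ring

end Prod

lemma or_or_le_apply_min_min {α β : Type*} [LinearOrder α] [LE β] (f : α → β) {k₁ k₂ k₃ : α}
    {x₁ x₂ x₃ : β} (h₁ : x₁ ≤ f k₁) (h₂ : x₂ ≤ f k₂) (h₃ : x₃ ≤ f k₃) :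
    x₁ ≤ f (min k₁ (min k₂ k₃)) ∨ x₂ ≤ f (min k₁ (min k₂ k₃)) ∨ x₃ ≤ f (min k₁ (min k₂ k₃)) := by
  rcases min_choice k₁ (min k₂ k₃) with h | h <;> rw [h]
  · exact Or.inl h₁
  · rcases min_choice k₂ k₃ with h' | h' <;> rw [h']
    · exact Or.inr (Or.inl h₂)
    · exact Or.inr (Or.inr h₃)

lemma measurableSet_DsetL (k l j : ℤ) : MeasurableSet (DsetL k l j) := by
  simp only [DsetL, Itilde, omega, Set.ofPred_and]
  refine ((measurableSet_le ?_ ?_).inter (measurableSet_le ?_ ?_)).inter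
    ((measurableSet_le ?_ ?_).inter (measurableSet_le ?_ ?_)) <;> fun_prop

section DsetL

variable {g : ℝ × ℝ × ℝ → ℝ≥0∞} {k l j : ℤ}

lemma volume_fst_image_support_le (hg : support g ⊆ DsetL k l j) :
    volume (Prod.fst '' support g) ≤ ENNReal.ofReal (2 * 2 ^ (k + 1)) := by
  rw [← Real.volume_closedBall 0]
  refine measure_mono ?_
  rintro _ ⟨p, hp, rfl⟩
  simpa using (hg hp).1.2

lemma volume_fst_image_support_fiber_le (hg : support g ⊆ DsetL k l j) (x : ℝ) :
    volume (Prod.fst '' support fun w : ℝ × ℝ => g (x, w)) ≤ ENNReal.ofReal (2 * 2 ^ l) := by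
  rw [← Real.volume_closedBall 0]
  refine measure_mono ?_
  rintro _ ⟨w, hw, rfl⟩
  simpa using (hg hw).2.1

lemma volume_support_fiber_fiber_le (hg : support g ⊆ DsetL k l j) (x y : ℝ) :
    volume (support fun z => g (x, (y, z))) ≤ ENNReal.ofReal (2 * 2 ^ j) := by
  rw [← Real.volume_closedBall (omega x y)]
  refine measure_mono fun z hz => ?_
  simpa [Real.dist_eq] using (hg hz).2.2

end DsetL

lemma convPairing_le_of_support_subset_DsetL {g₁ g₂ g₃ : ℝ × ℝ × ℝ → ℝ≥0∞}
    {k₁ k₂ k₃ l₁ l₂ l₃ j₁ j₂ j₃ : ℤ} (h₁ : Measurable g₁) (h₂ : Measurable g₂)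
    (h₃ : Measurable g₃) (hs₁ : support g₁ ⊆ DsetL k₁ l₁ j₁)
    (hs₂ : support g₂ ⊆ DsetL k₂ l₂ j₂) (hs₃ : support g₃ ⊆ DsetL k₃ l₃ j₃) :
    convPairing volume g₁ g₂ g₃ ≤
      ENNReal.ofReal (2 * 2 ^ min j₁ (min j₂ j₃)) ^ (1 / 2 : ℝ) *
        ENNReal.ofReal (2 * 2 ^ min l₁ (min l₂ l₃)) ^ (1 / 2 : ℝ) *
        ENNReal.ofReal (2 * 2 ^ (min k₁ (min k₂ k₃) + 1)) ^ (1 / 2 : ℝ) *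
        (eLpNorm g₁ 2 volume * eLpNorm g₂ 2 volume * eLpNorm g₃ 2 volume) := by
  rw [Measure.volume_eq_prod]
  refine convPairing_prod_le h₁ h₂ h₃ (fun x₁ x₂ => ?_)
    (or_or_le_apply_min_min (fun m : ℤ => ENNReal.ofReal (2 * 2 ^ (m + 1)))
      (volume_fst_image_support_le hs₁) (volume_fst_image_support_le hs₂)
      (volume_fst_image_support_le hs₃))
  rw [Measure.volume_eq_prod]
  refine convPairing_prod_le (by fun_prop) (by fun_prop) (by fun_prop) (fun y₁ y₂ => ?_)
    (or_or_le_apply_min_min (fun m : ℤ => ENNReal.ofReal (2 * 2 ^ m))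
      (volume_fst_image_support_fiber_le hs₁ x₁) (volume_fst_image_support_fiber_le hs₂ x₂)
      (volume_fst_image_support_fiber_le hs₃ (x₁ + x₂)))
  exact convPairing_le_of_measure_support (by fun_prop) (by fun_prop) (by fun_prop)
    (or_or_le_apply_min_min (fun m : ℤ => ENNReal.ofReal (2 * 2 ^ m))
      (volume_support_fiber_fiber_le hs₁ x₁ y₁) (volume_support_fiber_fiber_le hs₂ x₂ y₂)
      (volume_support_fiber_fiber_le hs₃ (x₁ + x₂) (y₁ + y₂)))

lemma two_mul_two_zpow_rpow_half (m : ℤ) :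
    (2 * 2 ^ m : ℝ) ^ (1 / 2 : ℝ) = 2 ^ (((m : ℝ) + 1) / 2) := by
  rw [← Real.rpow_intCast, mul_comm, ← Real.rpow_add_one two_ne_zero,
    ← Real.rpow_mul zero_le_two]
  ring_nf

lemma ofReal_rpow_half_mul_mul_eq (a b c : ℤ) :
    ENNReal.ofReal (2 * 2 ^ a) ^ (1 / 2 : ℝ) * ENNReal.ofReal (2 * 2 ^ b) ^ (1 / 2 : ℝ) *
        ENNReal.ofReal (2 * 2 ^ (c + 1)) ^ (1 / 2 : ℝ) =
      ENNReal.ofReal (4 * 2 ^ (((c : ℝ) + b + a) / 2)) := by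
  have h2 (m : ℤ) : (0 : ℝ) ≤ 2 * 2 ^ m := by positivity
  rw [ENNReal.ofReal_rpow_of_nonneg (h2 a) one_half_pos.le,
    ENNReal.ofReal_rpow_of_nonneg (h2 b) one_half_pos.le,
    ENNReal.ofReal_rpow_of_nonneg (h2 (c + 1)) one_half_pos.le,
    ← ENNReal.ofReal_mul (by positivity), ← ENNReal.ofReal_mul (by positivity)]
  congr 1
  simp only [two_mul_two_zpow_rpow_half]
  rw [← Real.rpow_add two_pos, ← Real.rpow_add two_pos,
    show (4 : ℝ) = 2 ^ (2 : ℝ) by norm_num, ← Real.rpow_add two_pos]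
  push_cast
  ring_nf

lemma exists_measurable_support_subset_ae_eq_enorm {α E : Type*} [MeasurableSpace α]
    {μ : Measure α} [NormedAddCommGroup E] {f : α → E} {D : Set α}
    (hf : AEStronglyMeasurable f μ) (hD : MeasurableSet D) (hs : support f ⊆ D) :
    ∃ g : α → ℝ≥0∞, Measurable g ∧ support g ⊆ D ∧ g =ᵐ[μ] fun x => ‖f x‖ₑ := by
  refine ⟨D.indicator fun x => ‖hf.mk f x‖ₑ, hf.stronglyMeasurable_mk.enorm.indicator hD,
    support_indicator_subset, ?_⟩
  filter_upwards [hf.ae_eq_mk] with x hx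
  by_cases hxD : x ∈ D
  · simp [hxD, hx]
  · rw [indicator_of_notMem hxD, notMem_support.mp (mt (@hs x) hxD), enorm_zero]

lemma eLpNorm_eq_of_ae_eq_enorm {α E : Type*} [MeasurableSpace α] {μ : Measure α}
    [NormedAddCommGroup E] {f : α → E} {g : α → ℝ≥0∞} (h : g =ᵐ[μ] fun x => ‖f x‖ₑ)
    (p : ℝ≥0∞) : eLpNorm g p μ = eLpNorm f p μ :=
  eLpNorm_congr_enorm_ae (h.mono fun x hx => by rw [enorm_eq_self, hx])

-- Instance search does not see through `volume = volume.prod volume` on a product type.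
instance : (volume : Measure (ℝ × ℝ × ℝ)).IsAddHaarMeasure :=
  Measure.prod.instIsAddHaarMeasure _ _

lemma lintegral_ofReal_conv_mul_le_convPairing {f₁ f₂ f₃ : ℝ × ℝ × ℝ → ℝ}
    {g₁ g₂ g₃ : ℝ × ℝ × ℝ → ℝ≥0∞} (h₁ : Measurable g₁) (h₂ : Measurable g₂)
    (h₃ : Measurable g₃) (he₁ : g₁ =ᵐ[volume] fun x => ‖f₁ x‖ₑ)
    (he₂ : g₂ =ᵐ[volume] fun x => ‖f₂ x‖ₑ) (he₃ : g₃ =ᵐ[volume] fun x => ‖f₃ x‖ₑ) :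
    ∫⁻ x, ENNReal.ofReal (conv f₁ f₂ x * f₃ x) ≤ convPairing volume g₁ g₂ g₃ := by
  rw [← lintegral_lconvolution_mul_eq_convPairing h₁ h₂ h₃]
  refine lintegral_mono_ae ?_
  filter_upwards [he₃] with x hx
  have hconv : ‖conv f₁ f₂ x‖ₑ ≤ (g₁ ⋆ₗ g₂) x := by
    refine (enorm_integral_le_lintegral_enorm _).trans_eq (lintegral_congr_ae ?_)
    have he₂x := (Measure.measurePreserving_sub_left volume x).quasiMeasurePreserving.ae_eq_comp he₂
    filter_upwards [he₁, he₂x] with y hy₁ hy₂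
    simp only [Function.comp_apply] at hy₂
    rw [enorm_mul, hy₁, neg_add_eq_sub, hy₂]
  calc ENNReal.ofReal (conv f₁ f₂ x * f₃ x) ≤ ‖conv f₁ f₂ x * f₃ x‖ₑ := Real.ofReal_le_enorm _
    _ = ‖conv f₁ f₂ x‖ₑ * g₃ x := by rw [enorm_mul, hx]
    _ ≤ (g₁ ⋆ₗ g₂) x * g₃ x := by gcongr

theorem stmt1 :
    ∃ C : ℝ, 0 < C ∧
      ∀ (k₁ k₂ k₃ l₁ l₂ l₃ j₁ j₂ j₃ : ℤ), 0 ≤ j₁ → 0 ≤ j₂ → 0 ≤ j₃ →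
      ∀ f₁ f₂ f₃ : ℝ × ℝ × ℝ → ℝ,
        (∀ x, 0 ≤ f₁ x) → (∀ x, 0 ≤ f₂ x) → (∀ x, 0 ≤ f₃ x) →
        MemLp f₁ 2 volume → MemLp f₂ 2 volume → MemLp f₃ 2 volume →
        Function.support f₁ ⊆ DsetL k₁ l₁ j₁ →
        Function.support f₂ ⊆ DsetL k₂ l₂ j₂ →
        Function.support f₃ ⊆ DsetL k₃ l₃ j₃ →
        (∫⁻ x : ℝ × ℝ × ℝ, ENNReal.ofReal (conv f₁ f₂ x * f₃ x)) ≤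
          ENNReal.ofReal (C * (2 : ℝ) ^
              ((((min k₁ (min k₂ k₃) : ℤ) : ℝ) + ((min l₁ (min l₂ l₃) : ℤ) : ℝ) +
                ((min j₁ (min j₂ j₃) : ℤ) : ℝ)) / 2)) *
            eLpNorm f₁ 2 volume * eLpNorm f₂ 2 volume * eLpNorm f₃ 2 volume := by
  refine ⟨4, by norm_num, ?_⟩
  intro k₁ k₂ k₃ l₁ l₂ l₃ j₁ j₂ j₃ _ _ _ f₁ f₂ f₃ _ _ _ hL₁ hL₂ hL₃ hs₁ hs₂ hs₃
  obtain ⟨g₁, h₁, hg₁, he₁⟩ :=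
    exists_measurable_support_subset_ae_eq_enorm hL₁.1 (measurableSet_DsetL k₁ l₁ j₁) hs₁
  obtain ⟨g₂, h₂, hg₂, he₂⟩ :=
    exists_measurable_support_subset_ae_eq_enorm hL₂.1 (measurableSet_DsetL k₂ l₂ j₂) hs₂
  obtain ⟨g₃, h₃, hg₃, he₃⟩ :=
    exists_measurable_support_subset_ae_eq_enorm hL₃.1 (measurableSet_DsetL k₃ l₃ j₃) hs₃
  calc (∫⁻ x, ENNReal.ofReal (conv f₁ f₂ x * f₃ x))
      ≤ convPairing volume g₁ g₂ g₃ :=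
        lintegral_ofReal_conv_mul_le_convPairing h₁ h₂ h₃ he₁ he₂ he₃
    _ ≤ _ := convPairing_le_of_support_subset_DsetL h₁ h₂ h₃ hg₁ hg₂ hg₃
    _ = _ := by
        rw [ofReal_rpow_half_mul_mul_eq, eLpNorm_eq_of_ae_eq_enorm he₁,
          eLpNorm_eq_of_ae_eq_enorm he₂, eLpNorm_eq_of_ae_eq_enorm he₃]
        ring
end

section
/- For all real ξ₁, ξ₂, μ₁, μ₂ with ξ₁ ≠ 0, ξ₂ ≠ 0 and ξ₁+ξ₂ ≠ 0, the resonance function satisfies the identity −ω(ξ₁+ξ₂, μ₁+μ₂) + ω(ξ₁,μ₁) + ω(ξ₂,μ₂) = −(ξ₁ξ₂/(ξ₁+ξ₂))·[ (√3·ξ₁ + √3·ξ₂)² − (μ₁/ξ₁ − μ₂/ξ₂)² ]. -/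
theorem stmt6 (ξ₁ ξ₂ μ₁ μ₂ : ℝ) (h₁ : ξ₁ ≠ 0) (h₂ : ξ₂ ≠ 0) (h : ξ₁ + ξ₂ ≠ 0) :
    -omega (ξ₁ + ξ₂) (μ₁ + μ₂) + omega ξ₁ μ₁ + omega ξ₂ μ₂ =
      -(ξ₁ * ξ₂ / (ξ₁ + ξ₂)) *
        ((Real.sqrt 3 * ξ₁ + Real.sqrt 3 * ξ₂) ^ 2 - (μ₁ / ξ₁ - μ₂ / ξ₂) ^ 2) := by
  have h3 : (Real.sqrt 3) ^ 2 = 3 := Real.sq_sqrt (by norm_num)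
  unfold omega
  field_simp
  ring_nf
  rw [h3]; ring
end
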